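/- The number of subgroups of order N in the group Z/N × Z/N equals the sum of divisors σ₁(N) = Σ_{k|N} k. -/
import Mathlib

open AddSubgroup

def Hdb (N d b : ℕ) : AddSubgroup (ZMod N × ZMod N) where
  carrier := {p | (d : ZMod N) * p.1 = 0 ∧ ((N / d : ℕ) : ZMod N) * p.2 = (b : ZMod N) * p.1}
  zero_mem' := by simp
  add_mem' := by
    rintro p q ⟨h1, h2⟩ ⟨h3, h4⟩
    refine ⟨?_, ?_⟩ <;> simp only [Prod.fst_add, Prod.snd_add, mul_add, h1, h2, h3, h4, add_zero]
  neg_mem' := by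
    rintro p ⟨h1, h2⟩
    refine ⟨?_, ?_⟩ <;>
      simp only [Prod.fst_neg, Prod.snd_neg, mul_neg, h1, h2, neg_zero]

lemma mem_Hdb {N d b : ℕ} {p : ZMod N × ZMod N} :
    p ∈ Hdb N d b ↔ (d : ZMod N) * p.1 = 0 ∧ ((N / d : ℕ) : ZMod N) * p.2 = (b : ZMod N) * p.1 :=
  Iff.rfl

lemma card_Hdb {N d : ℕ} (hN : 0 < N) (hd : d ∣ N) (b : ℕ) :
    Nat.card (Hdb N d b) = N := by
  haveI : NeZero N := ⟨hN.ne'⟩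
  have hd0 : 0 < d := Nat.pos_of_dvd_of_pos hd hN
  have he : 0 < N / d := Nat.div_pos (Nat.le_of_dvd hN hd) hd0
  haveI : NeZero d := ⟨hd0.ne'⟩
  haveI : NeZero (N / d) := ⟨he.ne'⟩
  have hde : d * (N / d) = N := Nat.mul_div_cancel' hd
  have hed : (N / d) * d = N := by rw [mul_comm]; exact hde
  set f : ZMod d × ZMod (N / d) → Hdb N d b := fun ij =>
    ⟨(((ij.1.val * (N / d) : ℕ) : ZMod N), ((ij.1.val * b + ij.2.val * d : ℕ) : ZMod N)), by
      constructor
      · rw [show ((d : ℕ) : ZMod N) * ((ij.1.val * (N / d) : ℕ) : ZMod N)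
            = ((d * (ij.1.val * (N / d)) : ℕ) : ZMod N) by push_cast; ring]
        rw [ZMod.natCast_eq_zero_iff]
        refine ⟨ij.1.val, ?_⟩
        have h1 : d * (ij.1.val * (N / d)) = ij.1.val * (d * (N / d)) := by ring
        rw [h1, hde, mul_comm]
      · rw [show ((N / d : ℕ) : ZMod N) * ((ij.1.val * b + ij.2.val * d : ℕ) : ZMod N)
            = (((N/d) * (ij.1.val * b + ij.2.val * d) : ℕ) : ZMod N) by push_cast; ring,
          show ((b : ℕ) : ZMod N) * ((ij.1.val * (N / d) : ℕ) : ZMod N)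
            = ((b * (ij.1.val * (N / d)) : ℕ) : ZMod N) by push_cast; ring,
          ZMod.natCast_eq_natCast_iff]
        have h2 : (N/d) * (ij.1.val * b + ij.2.val * d)
            = b * (ij.1.val * (N / d)) + ij.2.val * ((N/d) * d) := by ring
        rw [hed] at h2
        rw [h2]
        simp [Nat.ModEq, Nat.add_mul_mod_self_right]⟩
  have hfbij : Function.Bijective f := by
    constructor
    · rintro ⟨i, j⟩ ⟨i', j'⟩ h
      have h' := Subtype.ext_iff.mp h
      have h1 := congrArg Prod.fst h'
      have h2 := congrArg Prod.snd h'
      simp only [f] at h1 h2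
      have l1 : i.val * (N / d) < N := by
        calc i.val * (N / d) < d * (N / d) := (Nat.mul_lt_mul_right he).mpr (ZMod.val_lt i)
        _ = N := hde
      have l1' : i'.val * (N / d) < N := by
        calc i'.val * (N / d) < d * (N / d) := (Nat.mul_lt_mul_right he).mpr (ZMod.val_lt i')
        _ = N := hde
      have hval := congrArg ZMod.val h1
      rw [ZMod.val_cast_of_lt l1, ZMod.val_cast_of_lt l1'] at hval
      have hii : i = i' := ZMod.val_injective _ (Nat.eq_of_mul_eq_mul_right he hval)
      subst hii
      have h2' : ((i.val * b : ℕ) : ZMod N) + ((j.val * d : ℕ) : ZMod N)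
          = ((i.val * b : ℕ) : ZMod N) + ((j'.val * d : ℕ) : ZMod N) := by
        rw [← Nat.cast_add, ← Nat.cast_add]; exact h2
      have h2'' := add_left_cancel h2'
      have l2 : j.val * d < N := by
        calc j.val * d < (N / d) * d := (Nat.mul_lt_mul_right hd0).mpr (ZMod.val_lt j)
        _ = N := hed
      have l2' : j'.val * d < N := by
        calc j'.val * d < (N / d) * d := (Nat.mul_lt_mul_right hd0).mpr (ZMod.val_lt j')
        _ = N := hed
      have hval2 := congrArg ZMod.val h2''
      rw [ZMod.val_cast_of_lt l2, ZMod.val_cast_of_lt l2'] at hval2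
      have : j = j' := ZMod.val_injective _ (Nat.eq_of_mul_eq_mul_right hd0 hval2)
      rw [this]
    · rintro ⟨⟨x, y⟩, hx, hy⟩
      simp only at hx hy
      -- extract i0
      have hx' : ((d * x.val : ℕ) : ZMod N) = 0 := by
        push_cast
        rw [ZMod.natCast_val, ZMod.cast_id]
        exact hx
      have hdvdx : (N / d) ∣ x.val := by
        obtain ⟨k, hk⟩ := (ZMod.natCast_eq_zero_iff _ _).mp hx'
        refine ⟨k, Nat.eq_of_mul_eq_mul_left hd0 ?_⟩
        rw [← mul_assoc, hde]
        exact hk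
      set i0 := x.val / (N / d) with hi0
      have hxval : (N / d) * i0 = x.val := Nat.mul_div_cancel' hdvdx
      have hi0lt : i0 < d := by
        rw [hi0, Nat.div_lt_iff_lt_mul he, mul_comm d (N/d), hed]
        exact ZMod.val_lt x
      -- extract j0
      set z : ZMod N := y - ((i0 * b : ℕ) : ZMod N) with hz
      have hzeq : ((N / d : ℕ) : ZMod N) * z = 0 := by
        rw [hz, mul_sub, hy]
        have hxcast : x = (((N / d) * i0 : ℕ) : ZMod N) := by
          rw [hxval, ZMod.natCast_val, ZMod.cast_id]
        rw [hxcast]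
        push_cast
        ring
      have hz' : (((N / d) * z.val : ℕ) : ZMod N) = 0 := by
        push_cast
        rw [ZMod.natCast_val, ZMod.cast_id]
        exact hzeq
      have hdvdz : d ∣ z.val := by
        obtain ⟨k, hk⟩ := (ZMod.natCast_eq_zero_iff _ _).mp hz'
        refine ⟨k, Nat.eq_of_mul_eq_mul_left he ?_⟩
        rw [← mul_assoc, mul_comm (N/d) d, hde]
        exact hk
      set j0 := z.val / d with hj0
      have hzval : d * j0 = z.val := Nat.mul_div_cancel' hdvdz
      have hj0lt : j0 < N / d := by
        rw [hj0, Nat.div_lt_iff_lt_mul hd0, mul_comm (N/d) d, hde]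
        exact ZMod.val_lt z
      refine ⟨⟨(i0 : ZMod d), (j0 : ZMod (N / d))⟩, ?_⟩
      apply Subtype.ext
      have hiv : (i0 : ZMod d).val = i0 := ZMod.val_cast_of_lt hi0lt
      have hjv : (j0 : ZMod (N / d)).val = j0 := ZMod.val_cast_of_lt hj0lt
      simp only [f, hiv, hjv]
      refine Prod.ext ?_ ?_
      · show ((i0 * (N / d) : ℕ) : ZMod N) = x
        rw [mul_comm, hxval, ZMod.natCast_val, ZMod.cast_id]
      · show ((i0 * b + j0 * d : ℕ) : ZMod N) = y
        have : ((j0 * d : ℕ) : ZMod N) = z := by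
          rw [mul_comm, hzval, ZMod.natCast_val, ZMod.cast_id]
        push_cast [this]
        rw [hz]
        push_cast
        ring
  rw [← Nat.card_eq_of_bijective f hfbij, Nat.card_prod, Nat.card_zmod, Nat.card_zmod, hde]

lemma zmod_addSubgroup_classify (N : ℕ) (hN : 0 < N) (S : AddSubgroup (ZMod N)) :
    ∃ m : ℕ, m ∣ N ∧ S = AddSubgroup.zmultiples ((m : ZMod N)) ∧ Nat.card S = N / m := by
  haveI : NeZero N := ⟨hN.ne'⟩
  set f : ℤ →+ ZMod N := Int.castAddHom (ZMod N) with hf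
  have hfs : Function.Surjective f := ZMod.intCast_surjective
  obtain ⟨a, ha⟩ := Int.subgroup_cyclic (S.comap f)
  set m := a.natAbs with hm
  have hTm : S.comap f = AddSubgroup.zmultiples ((m : ℤ)) := by
    rw [ha, ← AddSubgroup.zmultiples_eq_closure]
    ext x
    rw [Int.mem_zmultiples_iff, Int.mem_zmultiples_iff, hm, Int.natAbs_dvd]
  have hNmem : (N : ℤ) ∈ S.comap f := by
    simp only [AddSubgroup.mem_comap, hf, Int.coe_castAddHom, Int.cast_natCast,
      ZMod.natCast_self]
    exact S.zero_mem
  have hmN : m ∣ N := by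
    rw [hTm, Int.mem_zmultiples_iff] at hNmem
    exact_mod_cast hNmem
  have hS : S = AddSubgroup.zmultiples ((m : ZMod N)) := by
    have := congrArg (AddSubgroup.map f) hTm
    rw [AddSubgroup.map_comap_eq_self_of_surjective hfs, AddMonoidHom.map_zmultiples] at this
    rw [this]
    norm_num [hf]
  refine ⟨m, hmN, hS, ?_⟩
  rw [hS, Nat.card_zmultiples, ZMod.addOrderOf_coe _ hN.ne', Nat.gcd_eq_right hmN]

lemma card_eq_card_map_fst_mul_card_comap_inr (N : ℕ) (H : AddSubgroup (ZMod N × ZMod N)) :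
    Nat.card H = Nat.card (H.map (AddMonoidHom.fst (ZMod N) (ZMod N)))
      * Nat.card (H.comap (AddMonoidHom.inr (ZMod N) (ZMod N))) := by
  set φ : H →+ ZMod N := (AddMonoidHom.fst (ZMod N) (ZMod N)).comp H.subtype with hφ
  have h1 : Nat.card H = Nat.card (H ⧸ φ.ker) * Nat.card φ.ker :=
    AddSubgroup.card_eq_card_quotient_mul_card_addSubgroup φ.ker
  have h2 : Nat.card (H ⧸ φ.ker) = Nat.card (H.map (AddMonoidHom.fst (ZMod N) (ZMod N))) := by
    have e := QuotientAddGroup.quotientKerEquivRange φ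
    rw [Nat.card_congr e.toEquiv]
    congr 1
    rw [hφ, AddMonoidHom.range_comp, AddSubgroup.range_subtype]
  have h3 : Nat.card φ.ker = Nat.card (H.comap (AddMonoidHom.inr (ZMod N) (ZMod N))) := by
    apply Nat.card_congr
    refine ⟨fun h => ⟨h.val.val.2, ?_⟩, fun y => ⟨⟨(0, y.val), y.prop⟩, ?_⟩, ?_, ?_⟩
    · have h0 : (h.val.val.1 : ZMod N) = 0 := h.prop
      have : h.val.val = (0, h.val.val.2) := Prod.ext h0 rfl
      show ((0 : ZMod N), h.val.val.2) ∈ H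
      rw [← this]
      exact h.val.prop
    · show ((0, y.val) : ZMod N × ZMod N).1 = 0
      rfl
    · intro h
      apply Subtype.ext
      apply Subtype.ext
      show ((0 : ZMod N), h.val.val.2) = h.val.val
      exact (Prod.ext h.prop.symm rfl)
    · intro y
      rfl
  rw [h1, h2, h3]
lemma addSubgroup_eq_of_le_of_card_eq {G : Type*} [AddGroup G] {H K : AddSubgroup G}
    (hle : H ≤ K) (hcard : Nat.card K ≤ Nat.card H) (hfin : (K : Set G).Finite) : H = K := by
  apply SetLike.coe_injective
  apply Set.eq_of_subset_of_ncard_le hle _ hfin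
  rwa [← Nat.card_coe_set_eq, ← Nat.card_coe_set_eq]

lemma exists_Hdb (N : ℕ) (hN : 0 < N) (H : AddSubgroup (ZMod N × ZMod N))
    (hH : Nat.card H = N) : ∃ d b : ℕ, d ∣ N ∧ b < d ∧ H = Hdb N d b := by
  haveI : NeZero N := ⟨hN.ne'⟩
  obtain ⟨d, hdN, hK, hcardK⟩ := zmod_addSubgroup_classify N hN
    (H.comap (AddMonoidHom.inr (ZMod N) (ZMod N)))
  obtain ⟨a, haN, hP, hcardP⟩ := zmod_addSubgroup_classify N hN
    (H.map (AddMonoidHom.fst (ZMod N) (ZMod N)))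
  have hd0 : 0 < d := Nat.pos_of_dvd_of_pos hdN hN
  have ha0 : 0 < a := Nat.pos_of_dvd_of_pos haN hN
  have hcard := card_eq_card_map_fst_mul_card_comap_inr N H
  rw [hH, hcardP, hcardK] at hcard
  -- N = (N/a) * (N/d), hence a * d = N, hence a = N / d
  have had : a * d = N := by
    have h1 : a * (N / a) = N := Nat.mul_div_cancel' haN
    have h2 : d * (N / d) = N := Nat.mul_div_cancel' hdN
    have h3 : (a * d) * N = N * N := by
      conv_lhs => rw [hcard]
      rw [show a * d * (N / a * (N / d)) = (a * (N/a)) * (d * (N/d)) by ring, h1, h2]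
    exact Nat.eq_of_mul_eq_mul_right hN h3
  have haNd : a = N / d := by
    rw [← had, Nat.mul_div_cancel _ hd0]
  -- pick p ∈ H with p.1 = a
  have hamem : ((a : ZMod N)) ∈ H.map (AddMonoidHom.fst (ZMod N) (ZMod N)) := by
    rw [hP]; exact AddSubgroup.mem_zmultiples _
  obtain ⟨p, hpH, hp1'⟩ := AddSubgroup.mem_map.mp hamem
  have hp1 : p.1 = (a : ZMod N) := hp1'
  set b := p.2.val % d with hb
  have hbd : b < d := Nat.mod_lt _ hd0
  -- key cast facts
  have hcad : ((a : ZMod N)) * (d : ZMod N) = 0 := by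
    rw [← Nat.cast_mul, had, ZMod.natCast_self]
  have hab : ((a : ZMod N)) * p.2 = (a : ZMod N) * (b : ZMod N) := by
    have hp2 : p.2 = ((d * (p.2.val / d) + b : ℕ) : ZMod N) := by
      rw [hb, Nat.div_add_mod, ZMod.natCast_val, ZMod.cast_id]
    rw [hp2]
    push_cast
    ring_nf
    rw [mul_comm ((a:ZMod N)) ((d:ZMod N))] at hcad
    linear_combination ((p.2.val / d : ℕ) : ZMod N) * hcad
  have hle : H ≤ Hdb N d b := by
    intro q hq
    have hq1mem : q.1 ∈ H.map (AddMonoidHom.fst (ZMod N) (ZMod N)) :=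
      AddSubgroup.mem_map.mpr ⟨q, hq, rfl⟩
    rw [hP, AddSubgroup.mem_zmultiples_iff] at hq1mem
    obtain ⟨k, hk⟩ := hq1mem
    have hq1 : q.1 = (k : ZMod N) * (a : ZMod N) := by rw [← hk, zsmul_eq_mul]
    -- q - k • p ∈ H and has first coordinate 0
    have hqp : q - k • p ∈ H := H.sub_mem hq (H.zsmul_mem hpH k)
    have hfst : (q - k • p).1 = 0 := by
      show q.1 - k • p.1 = 0
      rw [hp1, hq1, zsmul_eq_mul, sub_self]
    have hsnd : (q - k • p).2 ∈ H.comap (AddMonoidHom.inr (ZMod N) (ZMod N)) := by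
      rw [AddSubgroup.mem_comap]
      show ((0 : ZMod N), (q - k • p).2) ∈ H
      have : ((0 : ZMod N), (q - k • p).2) = q - k • p := Prod.ext hfst.symm rfl
      rw [this]; exact hqp
    rw [hK, AddSubgroup.mem_zmultiples_iff] at hsnd
    obtain ⟨l, hl⟩ := hsnd
    have hq2 : q.2 - (k : ZMod N) * p.2 = (l : ZMod N) * (d : ZMod N) := by
      calc q.2 - (k : ZMod N) * p.2 = q.2 - k • p.2 := by rw [zsmul_eq_mul]
      _ = (q - k • p).2 := rfl
      _ = l • (d : ZMod N) := hl.symm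
      _ = (l : ZMod N) * (d : ZMod N) := by rw [zsmul_eq_mul]
    constructor
    · show (d : ZMod N) * q.1 = 0
      linear_combination (d : ZMod N) * hq1 + (k : ZMod N) * hcad
    · show ((N / d : ℕ) : ZMod N) * q.2 = (b : ZMod N) * q.1
      rw [← haNd]
      linear_combination (a : ZMod N) * hq2 + (k : ZMod N) * hab
        + (l : ZMod N) * hcad - (b : ZMod N) * hq1
  refine ⟨d, b, hdN, hbd, ?_⟩
  apply addSubgroup_eq_of_le_of_card_eq hle
  · rw [hH, card_Hdb hN hdN]
  · exact Set.toFinite _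
lemma Hdb_dvd {N d d' b b' : ℕ} (hN : 0 < N) (hd : d ∣ N) (hd' : d' ∣ N)
    (h : Hdb N d b ≤ Hdb N d' b') : d' ∣ d := by
  haveI : NeZero N := ⟨hN.ne'⟩
  have hd0 : 0 < d := Nat.pos_of_dvd_of_pos hd hN
  have hd'0 : 0 < d' := Nat.pos_of_dvd_of_pos hd' hN
  have he' : 0 < N / d' := Nat.div_pos (Nat.le_of_dvd hN hd') hd'0
  have hmem : ((0 : ZMod N), (d : ZMod N)) ∈ Hdb N d b := by
    refine ⟨by simp, ?_⟩
    show ((N / d : ℕ) : ZMod N) * (d : ZMod N) = (b : ZMod N) * 0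
    rw [← Nat.cast_mul, Nat.div_mul_cancel hd, ZMod.natCast_self, mul_zero]
  have h2 := (h hmem).2
  show d' ∣ d
  have : (((N / d') * d : ℕ) : ZMod N) = 0 := by
    push_cast
    rw [h2]
    simp
  have hNdvd := (ZMod.natCast_eq_zero_iff _ _).mp this
  obtain ⟨k, hk⟩ := hNdvd
  refine ⟨k, Nat.eq_of_mul_eq_mul_left he' ?_⟩
  rw [← mul_assoc, Nat.div_mul_cancel hd']  -- (N/d')*(d'*k) = N*k
  exact hk

lemma Hdb_inj {N d d' b b' : ℕ} (hN : 0 < N) (hd : d ∣ N) (hd' : d' ∣ N)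
    (hb : b < d) (hb' : b' < d') (h : Hdb N d b = Hdb N d' b') : d = d' ∧ b = b' := by
  haveI : NeZero N := ⟨hN.ne'⟩
  have hdd : d = d' :=
    Nat.dvd_antisymm (Hdb_dvd hN hd' hd h.ge) (Hdb_dvd hN hd hd' h.le)
  subst hdd
  refine ⟨rfl, ?_⟩
  have hd0 : 0 < d := Nat.pos_of_dvd_of_pos hd hN
  have he : 0 < N / d := Nat.div_pos (Nat.le_of_dvd hN hd) hd0
  have hmem : (((N / d : ℕ) : ZMod N), (b : ZMod N)) ∈ Hdb N d b := by
    constructor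
    · show (d : ZMod N) * ((N / d : ℕ) : ZMod N) = 0
      rw [← Nat.cast_mul, Nat.mul_div_cancel' hd, ZMod.natCast_self]
    · show ((N / d : ℕ) : ZMod N) * (b : ZMod N) = (b : ZMod N) * ((N / d : ℕ) : ZMod N)
      ring
  rw [h] at hmem
  have h2 := hmem.2
  have hcast : (((N / d) * b : ℕ) : ZMod N) = (((N / d) * b' : ℕ) : ZMod N) := by
    push_cast
    rw [h2]
    ring
  have hmod : (N / d) * b ≡ (N / d) * b' [MOD N] := (ZMod.natCast_eq_natCast_iff _ _ _).mp hcast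
  have hmod' : b ≡ b' [MOD d] := by
    apply Nat.ModEq.mul_left_cancel' he.ne'
    rwa [Nat.div_mul_cancel hd]
  have := hmod'
  rwa [Nat.ModEq, Nat.mod_eq_of_lt hb, Nat.mod_eq_of_lt hb'] at this


/-- The number of subgroups of order `N` in `ℤ/N × ℤ/N` equals the sum of
divisors `σ₁(N) = ∑_{k ∣ N} k`. -/
theorem subgroup_count_eq_sigma (N : ℕ) (hN : 0 < N) :
    Nat.card {H : AddSubgroup (ZMod N × ZMod N) // Nat.card H = N} =
      ∑ k ∈ N.divisors, k := by
  haveI : NeZero N := ⟨hN.ne'⟩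
  letI inst1 : ∀ d : N.divisors, NeZero (d : ℕ) :=
    fun d => ⟨(Nat.pos_of_mem_divisors d.2).ne'⟩
  letI inst2 : ∀ d : N.divisors, Fintype (ZMod (d : ℕ)) :=
    fun d => @ZMod.fintype _ (inst1 d)
  set F : (Σ d : N.divisors, ZMod (d : ℕ)) → {H : AddSubgroup (ZMod N × ZMod N) // Nat.card H = N} :=
    fun x => ⟨Hdb N x.1 (x.2.val), card_Hdb hN (Nat.dvd_of_mem_divisors x.1.2) _⟩ with hF
  have hFbij : Function.Bijective F := by
    constructor
    · rintro ⟨⟨dx, hdx⟩, bx⟩ ⟨⟨dy, hdy⟩, by'⟩ h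
      have h' : Hdb N dx bx.val = Hdb N dy by'.val := Subtype.ext_iff.mp h
      haveI : NeZero dx := inst1 ⟨dx, hdx⟩
      haveI : NeZero dy := inst1 ⟨dy, hdy⟩
      obtain ⟨hdd, hbb⟩ := Hdb_inj hN (Nat.dvd_of_mem_divisors hdx)
        (Nat.dvd_of_mem_divisors hdy) (ZMod.val_lt bx) (ZMod.val_lt by') h'
      subst hdd
      have : bx = by' := ZMod.val_injective _ hbb
      subst this
      rfl
    · rintro ⟨H, hH⟩
      obtain ⟨d, b, hd, hb, heq⟩ := exists_Hdb N hN H hH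
      haveI : NeZero d := ⟨(Nat.pos_of_dvd_of_pos hd hN).ne'⟩
      refine ⟨⟨⟨d, Nat.mem_divisors.mpr ⟨hd, hN.ne'⟩⟩, (b : ZMod d)⟩, ?_⟩
      apply Subtype.ext
      show Hdb N d ((b : ZMod d)).val = H
      rw [ZMod.val_cast_of_lt hb, heq]
  letI : Fintype (Σ d : N.divisors, ZMod (d : ℕ)) := Sigma.instFintype
  rw [← Nat.card_eq_of_bijective F hFbij, Nat.card_eq_fintype_card, Fintype.card_sigma]
  have step1 : (∑ d : N.divisors, Fintype.card (ZMod (d : ℕ))) = ∑ d : N.divisors, (d : ℕ) :=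
    Finset.sum_congr rfl (fun d _ => ZMod.card _)
  rw [step1]
  exact Finset.sum_coe_sort N.divisors (fun k => k)
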